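/- arXiv:1611.09448 — 6 statements merged into one kernel-verified Lean document; each statement's English description precedes it below -/
import Mathlib

section
/- Let l ≥ 1, p ≥ 1, and n_1, …, n_l ≥ 1. For every l-layer ℝ → ℝ^p ReLU neural network with n_i neurons in layer i (i.e., for every choice of weights and biases), the set of knots of the network output function is finite and its cardinality m_l satisfies m_l ≤ Σ_{i=1}^{l} n_i ∏_{j=i+1}^{l} (n_j + 1). -/
/-- The rectified linear unit `σ(x) = max(0, x)`. -/
noncomputable def relu (x : ℝ) : ℝ := max 0 x

/-- Outputs of hidden layer `i` (0-indexed, so layer `i` of the paper is index `i - 1`)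
of a fully-connected feedforward ReLU network with scalar input.
`n i` is the number of neurons in (0-indexed) layer `i`,
`w1 b1` are the input weights and biases of the first hidden layer, and
`w i`, `b i` are the weights and biases mapping layer `i` to layer `i + 1`. -/
noncomputable def layerOut (n : ℕ → ℕ)
    (w1 b1 : Fin (n 0) → ℝ)
    (w : (i : ℕ) → Fin (n (i + 1)) → Fin (n i) → ℝ)
    (b : (i : ℕ) → Fin (n (i + 1)) → ℝ) :
    (i : ℕ) → ℝ → Fin (n i) → ℝ
  | 0 => fun x k => relu (w1 k * x + b1 k)
  | (i + 1) => fun x k =>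
      relu ((∑ j, w i k j * layerOut n w1 b1 w b i x j) + b i k)

/-- The output `y : ℝ → ℝ^p` of an `l`-layer ReLU network (`l ≥ 1`), with output
weights `wOut` and output biases `bOut` applied to the last hidden layer `l - 1`. -/
noncomputable def netOut (l p : ℕ) (n : ℕ → ℕ)
    (w1 b1 : Fin (n 0) → ℝ)
    (w : (i : ℕ) → Fin (n (i + 1)) → Fin (n i) → ℝ)
    (b : (i : ℕ) → Fin (n (i + 1)) → ℝ)
    (wOut : Fin p → Fin (n (l - 1)) → ℝ) (bOut : Fin p → ℝ)
    (x : ℝ) : Fin p → ℝ :=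
  fun k => (∑ j, wOut k j * layerOut n w1 b1 w b (l - 1) x j) + bOut k

/-!
On a cell of the real line cut out by a finite set `S`, a piecewise affine function with knots in
`S` is affine, so it either vanishes identically there or has at most one zero. Composing with ReLU
therefore creates at most one new knot per cell, i.e. at most `#S + 1` per neuron, while affine
combinations create none. If the first `i` layers have knots in `S`, layer `i + 1` has knots in a
set of size at most `#S + n_{i+1} (#S + 1)`, and this recursion solves to the stated bound.
-/

open Filter Topology Finset

def SameCell (S : Finset ℝ) (x y : ℝ) : Prop := ∀ s ∈ S, s ∉ Set.uIcc x y

def IsPiecewiseAffine (S : Finset ℝ) (f : ℝ → ℝ) : Prop :=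
  Continuous f ∧ ∀ x ∉ S, ∃ a c : ℝ, ∀ y, SameCell S x y → f y = a * y + c

namespace SameCell

variable {S T : Finset ℝ} {x y z : ℝ}

theorem symm (h : SameCell S x y) : SameCell S y x := by
  intro s hs; rw [Set.uIcc_comm]; exact h s hs

theorem refl (hx : x ∉ S) : SameCell S x x := by
  intro s hs hmem
  rw [Set.uIcc_self, Set.mem_singleton_iff] at hmem
  exact hx (hmem ▸ hs)

theorem of_mem_uIcc (h : SameCell S x y) (hz : z ∈ Set.uIcc x y) : SameCell S x z :=
  fun s hs hmem => h s hs (Set.uIcc_subset_uIcc Set.left_mem_uIcc hz hmem)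

theorem mono (hST : S ⊆ T) (h : SameCell T x y) : SameCell S x y :=
  fun s hs => h s (hST hs)

theorem eventually (hx : x ∉ S) : ∀ᶠ y in 𝓝 x, SameCell S x y := by
  refine (Filter.eventually_all_finset S).2 fun s hs => ?_
  rcases lt_or_gt_of_ne (ne_of_mem_of_not_mem hs hx) with hsx | hxs
  · filter_upwards [Ioi_mem_nhds hsx] with y (hy : s < y)
    rw [Set.mem_uIcc]; intro h; rcases h with h | h <;> linarith [h.1, h.2]
  · filter_upwards [Iio_mem_nhds hxs] with y (hy : y < s)
    rw [Set.mem_uIcc]; intro h; rcases h with h | h <;> linarith [h.1, h.2]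

end SameCell

theorem sameCell_of_card_filter_lt_eq {S : Finset ℝ} {x y : ℝ} (hx : x ∉ S) (hy : y ∉ S)
    (hxy : #{s ∈ S | s < x} = #{s ∈ S | s < y}) : SameCell S x y := by
  wlog hle : x ≤ y generalizing x y
  · exact (this hy hx hxy.symm (le_of_not_ge hle)).symm
  intro s hs hmem
  rw [Set.uIcc_of_le hle, Set.mem_Icc] at hmem
  have hxs : x < s := lt_of_le_of_ne hmem.1 (ne_of_mem_of_not_mem hs hx).symm
  have hsy : s < y := lt_of_le_of_ne hmem.2 (ne_of_mem_of_not_mem hs hy)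
  have hsub : {t ∈ S | t < x} ⊆ {t ∈ S | t < y} :=
    Finset.monotone_filter_right S fun _ _ h => lt_of_lt_of_le h hle
  have hssub : {t ∈ S | t < x} ⊂ {t ∈ S | t < y} :=
    (Finset.ssubset_iff_of_subset hsub).2
      ⟨s, Finset.mem_filter.2 ⟨hs, hsy⟩, fun h => (Finset.mem_filter.1 h).2.not_gt hxs⟩
  exact (Finset.card_lt_card hssub).ne hxy

theorem exists_finset_card_le_of_sameCell {S : Finset ℝ} {Z : Set ℝ} (hZS : ∀ z ∈ Z, z ∉ S)
    (hZ : ∀ x ∈ Z, ∀ y ∈ Z, SameCell S x y → x = y) :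
    ∃ N : Finset ℝ, (N : Set ℝ) = Z ∧ #N ≤ #S + 1 := by
  set rank : ℝ → ℕ := fun x => #{s ∈ S | s < x}
  have hmaps : Set.MapsTo rank Z (Finset.range (#S + 1)) := fun x _ => by
    simpa [rank, Nat.lt_succ_iff] using Finset.card_filter_le S _
  have hinj : Set.InjOn rank Z := fun x hx y hy hxy =>
    hZ x hx y hy (sameCell_of_card_filter_lt_eq (hZS x hx) (hZS y hy) hxy)
  have hfin : Z.Finite := Set.Finite.of_injOn hmaps hinj (Finset.finite_toSet _)
  refine ⟨hfin.toFinset, hfin.coe_toFinset, ?_⟩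
  rw [← Set.ncard_eq_toFinset_card Z hfin]
  simpa using Set.ncard_le_ncard_of_injOn rank hmaps hinj

/-- The points where `relu ∘ f` may acquire a new knot: zeros of `f` off `S` whose cell is not
a zero interval of `f`. -/
def crossingSet (S : Finset ℝ) (f : ℝ → ℝ) : Set ℝ :=
  {x | x ∉ S ∧ f x = 0 ∧ ∃ y, SameCell S x y ∧ f y ≠ 0}

namespace IsPiecewiseAffine

variable {S T : Finset ℝ} {f : ℝ → ℝ}

theorem of_affine (a c : ℝ) : IsPiecewiseAffine S fun x => a * x + c :=
  ⟨by fun_prop, fun _ _ => ⟨a, c, fun _ _ => rfl⟩⟩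

theorem affine_comb {ι : Type*} [Fintype ι] {g : ι → ℝ → ℝ}
    (hg : ∀ j, IsPiecewiseAffine S (g j)) (w : ι → ℝ) (c : ℝ) :
    IsPiecewiseAffine S fun x => (∑ j, w j * g j x) + c := by
  have hcont : ∀ j, Continuous (g j) := fun j => (hg j).1
  refine ⟨by fun_prop, fun x hx => ?_⟩
  choose a d had using fun j => (hg j).2 x hx
  refine ⟨∑ j, w j * a j, (∑ j, w j * d j) + c, fun y hy => ?_⟩
  simp only [had _ y hy, mul_add, Finset.sum_add_distrib, Finset.sum_mul, mul_assoc]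
  ring

theorem differentiableAt (hf : IsPiecewiseAffine S f) {x : ℝ} (hx : x ∉ S) :
    DifferentiableAt ℝ f x := by
  obtain ⟨a, c, hac⟩ := hf.2 x hx
  exact ((differentiableAt_id.const_mul a).add_const c).congr_of_eventuallyEq
    ((SameCell.eventually hx).mono hac)

theorem eq_of_mem_crossingSet (hf : IsPiecewiseAffine S f) {x y : ℝ}
    (hx : x ∈ crossingSet S f) (hy : y ∈ crossingSet S f) (hxy : SameCell S x y) : x = y := by
  obtain ⟨hxS, hfx, z, hxz, hfz⟩ := hx
  obtain ⟨a, c, hac⟩ := hf.2 x hxS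
  have hx0 : a * x + c = 0 := hfx ▸ (hac x (SameCell.refl hxS)).symm
  have hy0 : a * y + c = 0 := hy.2.1 ▸ (hac y hxy).symm
  have ha : a ≠ 0 := by
    rintro rfl
    exact hfz (by rw [hac z hxz]; linarith)
  exact mul_left_cancel₀ ha (by linarith)

theorem exists_finset_crossingSet (hf : IsPiecewiseAffine S f) :
    ∃ N : Finset ℝ, (N : Set ℝ) = crossingSet S f ∧ #N ≤ #S + 1 :=
  exists_finset_card_le_of_sameCell (fun _ hz => hz.1)
    fun _ hx _ hy => hf.eq_of_mem_crossingSet hx hy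

theorem relu_comp (hf : IsPiecewiseAffine S f) (hST : S ⊆ T) (hZT : crossingSet S f ⊆ T) :
    IsPiecewiseAffine T fun x => relu (f x) := by
  refine ⟨continuous_const.max hf.1, fun x hxT => ?_⟩
  have hxS : x ∉ S := fun h => hxT (hST h)
  obtain ⟨a, c, hac⟩ := hf.2 x hxS
  by_cases hfx : f x = 0
  · have hzero : ∀ y, SameCell S x y → f y = 0 := fun y hy => by
      by_contra hfy
      exact hxT (hZT ⟨hxS, hfx, y, hy, hfy⟩)
    refine ⟨0, 0, fun y hy => ?_⟩
    simp [hzero y (hy.mono hST), relu]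
  -- A zero `z` of `f` between `x` and `y` would be a crossing point, hence in `T`.
  have hsign : ∀ y, SameCell T x y → (0 : ℝ) ∉ Set.uIcc (f x) (f y) := fun y hy h0 => by
    obtain ⟨z, hz, hfz⟩ := intermediate_value_uIcc hf.1.continuousOn h0
    have hzx : SameCell S z x := ((hy.of_mem_uIcc hz).mono hST).symm
    have hzS : z ∉ S := fun h => hy z (hST h) hz
    exact hy z (hZT ⟨hzS, hfz, x, hzx, hfx⟩) hz
  by_cases hpos : 0 < f x
  · refine ⟨a, c, fun y hy => ?_⟩
    have hfy : 0 < f y := by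
      by_contra h
      exact hsign y hy (Set.mem_uIcc.2 (Or.inr ⟨not_lt.1 h, hpos.le⟩))
    rw [← hac y (hy.mono hST)]
    exact max_eq_right hfy.le
  · refine ⟨0, 0, fun y hy => ?_⟩
    have hfy : f y ≤ 0 := by
      by_contra h
      exact hsign y hy (Set.mem_uIcc.2 (Or.inl ⟨not_lt.1 hpos, (not_le.1 h).le⟩))
    simp [relu, hfy]

theorem exists_relu_family {ι : Type*} [Fintype ι] {f : ι → ℝ → ℝ}
    (hf : ∀ k, IsPiecewiseAffine S (f k)) :
    ∃ T : Finset ℝ, #T ≤ #S + Fintype.card ι * (#S + 1) ∧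
      ∀ k, IsPiecewiseAffine T fun x => relu (f k x) := by
  classical
  choose N hN hcard using fun k => (hf k).exists_finset_crossingSet
  refine ⟨S ∪ Finset.univ.biUnion N, ?_, fun k => (hf k).relu_comp Finset.subset_union_left ?_⟩
  · calc #(S ∪ Finset.univ.biUnion N) ≤ #S + ∑ k, #(N k) :=
          (Finset.card_union_le _ _).trans (Nat.add_le_add_left Finset.card_biUnion_le _)
      _ ≤ #S + ∑ _k : ι, (#S + 1) := by gcongr with k; exact hcard k
      _ = #S + Fintype.card ι * (#S + 1) := by simp
  · rw [← hN k]
    exact Finset.coe_subset.2 (Finset.subset_union_right.trans' (Finset.subset_biUnion_of_mem N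
      (Finset.mem_univ k)))

end IsPiecewiseAffine

def knotBound (n : ℕ → ℕ) (l : ℕ) : ℕ :=
  ∑ i ∈ Finset.range l, n i * ∏ j ∈ Finset.Ico (i + 1) l, (n j + 1)

theorem knotBound_zero (n : ℕ → ℕ) : knotBound n 0 = 0 := rfl

theorem knotBound_succ (n : ℕ → ℕ) (l : ℕ) :
    knotBound n (l + 1) = knotBound n l + n l * (knotBound n l + 1) := by
  have hprod : ∀ i ∈ Finset.range l,
      n i * ∏ j ∈ Finset.Ico (i + 1) (l + 1), (n j + 1) =
        n i * (∏ j ∈ Finset.Ico (i + 1) l, (n j + 1)) * (n l + 1) := fun i hi => by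
    rw [Finset.prod_Ico_succ_top (Finset.mem_range.1 hi), mul_assoc]
  rw [knotBound, Finset.sum_range_succ, Finset.sum_congr rfl hprod, ← Finset.sum_mul,
    Finset.Ico_self, Finset.prod_empty, ← knotBound]
  ring

theorem exists_knots_layerOut (n : ℕ → ℕ) (w1 b1 : Fin (n 0) → ℝ)
    (w : (i : ℕ) → Fin (n (i + 1)) → Fin (n i) → ℝ) (b : (i : ℕ) → Fin (n (i + 1)) → ℝ)
    (i : ℕ) :
    ∃ S : Finset ℝ, #S ≤ knotBound n (i + 1) ∧
      ∀ k, IsPiecewiseAffine S fun x => layerOut n w1 b1 w b i x k := by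
  induction i with
  | zero =>
    obtain ⟨T, hT, hrelu⟩ := IsPiecewiseAffine.exists_relu_family (S := ∅)
      fun k => IsPiecewiseAffine.of_affine (w1 k) (b1 k)
    exact ⟨T, by simpa [knotBound_succ, knotBound_zero] using hT, hrelu⟩
  | succ i ih =>
    obtain ⟨S, hS, hlayer⟩ := ih
    obtain ⟨T, hT, hrelu⟩ := IsPiecewiseAffine.exists_relu_family
      fun k => IsPiecewiseAffine.affine_comb hlayer (w i k) (b i k)
    refine ⟨T, hT.trans ?_, hrelu⟩
    rw [knotBound_succ n (i + 1), Fintype.card_fin]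
    gcongr

theorem knot_upper_bound_general (l p : ℕ) (hl : 1 ≤ l)
    (n : ℕ → ℕ)
    (w1 b1 : Fin (n 0) → ℝ)
    (w : (i : ℕ) → Fin (n (i + 1)) → Fin (n i) → ℝ)
    (b : (i : ℕ) → Fin (n (i + 1)) → ℝ)
    (wOut : Fin p → Fin (n (l - 1)) → ℝ) (bOut : Fin p → ℝ) :
    {x : ℝ | ¬ DifferentiableAt ℝ (netOut l p n w1 b1 w b wOut bOut) x}.Finite ∧
    {x : ℝ | ¬ DifferentiableAt ℝ (netOut l p n w1 b1 w b wOut bOut) x}.ncard ≤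
      ∑ i ∈ Finset.range l, n i * ∏ j ∈ Finset.Ico (i + 1) l, (n j + 1) := by
  obtain ⟨S, hS, hlast⟩ := exists_knots_layerOut n w1 b1 w b (l - 1)
  rw [Nat.sub_add_cancel hl] at hS
  have hknots : {x : ℝ | ¬ DifferentiableAt ℝ (netOut l p n w1 b1 w b wOut bOut) x} ⊆ S :=
    fun x hx => by
      by_contra hxS
      exact hx (differentiableAt_pi.2 fun k =>
        (IsPiecewiseAffine.affine_comb hlast (wOut k) (bOut k)).differentiableAt hxS)
  refine ⟨S.finite_toSet.subset hknots, ?_⟩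
  calc _ ≤ (S : Set ℝ).ncard := Set.ncard_le_ncard hknots S.finite_toSet
    _ = #S := Set.ncard_coe_finset S
    _ ≤ knotBound n l := hS

/-- **Theorem 1 (knot upper bound).** For every `l`-layer `ℝ → ℝ^p` ReLU neural network
with `n i ≥ 1` neurons in layer `i`, the set of knots (points of non-differentiability
of the output) is finite with cardinality at most
`∑_{i=1}^{l} n_i ∏_{j=i+1}^{l} (n_j + 1)` (here 0-indexed). -/
theorem knot_upper_bound (l p : ℕ) (hl : 1 ≤ l) (hp : 1 ≤ p)
    (n : ℕ → ℕ) (hn : ∀ i, i < l → 1 ≤ n i)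
    (w1 b1 : Fin (n 0) → ℝ)
    (w : (i : ℕ) → Fin (n (i + 1)) → Fin (n i) → ℝ)
    (b : (i : ℕ) → Fin (n (i + 1)) → ℝ)
    (wOut : Fin p → Fin (n (l - 1)) → ℝ) (bOut : Fin p → ℝ) :
    {x : ℝ | ¬ DifferentiableAt ℝ (netOut l p n w1 b1 w b wOut bOut) x}.Finite ∧
    {x : ℝ | ¬ DifferentiableAt ℝ (netOut l p n w1 b1 w b wOut bOut) x}.ncard ≤
      ∑ i ∈ Finset.range l, n i * ∏ j ∈ Finset.Ico (i + 1) l, (n j + 1) :=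
  knot_upper_bound_general l p hl n w1 b1 w b wOut bOut
end

section
/- Let n ≥ 1, p ≥ 1, and let w_{1j}, b_{1j} ∈ ℝ with w_{1j} ≠ 0 for j = 1, …, n, and w_{2kj}, b_{2k} ∈ ℝ for k = 1, …, p. Define c_{1k} = Σ_{j : w_{1j} < 0} w_{2kj} w_{1j}, c_{0k} = Σ_{j : w_{1j} < 0} w_{2kj} b_{1j} + b_{2k}, s_{kj} = w_{2kj} |w_{1j}|, and x_j = −b_{1j} / w_{1j}. Then for every x ∈ ℝ and every k = 1, …, p: Σ_{j=1}^{n} w_{2kj} σ(w_{1j} x + b_{1j}) + b_{2k} = Σ_{j=1}^{n} s_{kj} σ(x − x_j) + c_{1k} x + c_{0k}. -/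
/-!
A neuron `σ(w x + b)` with `w ≠ 0` kinks at `x_j = -b / w`, and `w x + b = w (x - x_j)`.
By positive homogeneity it is `|w| σ(x - x_j)` when `w > 0`; when `w < 0`, the identity
`σ(t) = t + σ(-t)` turns it into the same forward-facing unit plus the affine function
`w x + b`. Summing over the neurons collects these affine parts into `c_{1k} x + c_{0k}`.
-/

open Finset

lemma relu_mul_of_nonneg {c : ℝ} (hc : 0 ≤ c) (t : ℝ) : relu (c * t) = c * relu t := by
  simp only [relu, mul_max_of_nonneg _ _ hc, mul_zero]

lemma relu_eq_add_relu_neg (t : ℝ) : relu t = t + relu (-t) := by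
  simp only [relu]
  rcases le_total t 0 with ht | ht
  · rw [max_eq_left ht, max_eq_right (neg_nonneg.mpr ht)]; ring
  · rw [max_eq_right ht, max_eq_left (neg_nonpos.mpr ht)]; ring

lemma relu_affine_eq {w : ℝ} (hw : w ≠ 0) (b x : ℝ) :
    relu (w * x + b) = |w| * relu (x - (-b / w)) + (if w < 0 then w * x + b else 0) := by
  have hkink : w * x + b = w * (x - (-b / w)) := by field_simp; ring
  rcases hw.lt_or_gt with hneg | hpos
  · rw [if_pos hneg, abs_of_neg hneg, relu_eq_add_relu_neg, hkink, ← neg_mul,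
      relu_mul_of_nonneg (neg_nonneg.mpr hneg.le), add_comm]
  · rw [if_neg hpos.not_gt, abs_of_pos hpos, hkink, relu_mul_of_nonneg hpos.le, add_zero]

lemma sum_mul_relu_affine_eq {ι : Type*} [Fintype ι] (c w b : ι → ℝ) (hw : ∀ j, w j ≠ 0)
    (x : ℝ) :
    ∑ j, c j * relu (w j * x + b j) =
      ∑ j, (c j * |w j|) * relu (x - (-(b j) / w j))
        + ∑ j ∈ univ.filter (fun j => w j < 0), c j * (w j * x + b j) := by
  simp only [relu_affine_eq (hw _), mul_add, mul_ite, mul_zero, sum_add_distrib, sum_ite,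
    sum_const_zero, add_zero, mul_assoc]

theorem forward_facing_relu_general (n p : ℕ)
    (w1 b1 : Fin n → ℝ) (hw1 : ∀ j, w1 j ≠ 0)
    (w2 : Fin p → Fin n → ℝ) (b2 : Fin p → ℝ)
    (x : ℝ) (k : Fin p) :
    (∑ j, w2 k j * relu (w1 j * x + b1 j)) + b2 k =
      (∑ j, (w2 k j * |w1 j|) * relu (x - (-(b1 j) / w1 j)))
        + (∑ j ∈ univ.filter (fun j => w1 j < 0), w2 k j * w1 j) * x
        + ((∑ j ∈ univ.filter (fun j => w1 j < 0), w2 k j * b1 j) + b2 k) := by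
  rw [sum_mul_relu_affine_eq (w2 k) w1 b1 hw1 x, sum_mul]
  simp only [mul_add, sum_add_distrib, mul_assoc]
  ring

open Finset in
/-- **Forward-facing ReLU representation (Lemma 1).** A single-hidden-layer `ℝ → ℝ^p`
ReLU network with nonzero input weights equals a sum of forward-facing rectified linear
units `σ(x - x_j)` plus an affine term, with
`c_{1k} = ∑_{j : w_{1j} < 0} w_{2kj} w_{1j}`,
`c_{0k} = ∑_{j : w_{1j} < 0} w_{2kj} b_{1j} + b_{2k}`,
`s_{kj} = w_{2kj} |w_{1j}|` and `x_j = -b_{1j} / w_{1j}`. -/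
theorem forward_facing_relu (n p : ℕ) (hn : 1 ≤ n) (hp : 1 ≤ p)
    (w1 b1 : Fin n → ℝ) (hw1 : ∀ j, w1 j ≠ 0)
    (w2 : Fin p → Fin n → ℝ) (b2 : Fin p → ℝ)
    (x : ℝ) (k : Fin p) :
    (∑ j, w2 k j * relu (w1 j * x + b1 j)) + b2 k =
      (∑ j, (w2 k j * |w1 j|) * relu (x - (-(b1 j) / w1 j)))
        + (∑ j ∈ univ.filter (fun j => w1 j < 0), w2 k j * w1 j) * x
        + ((∑ j ∈ univ.filter (fun j => w1 j < 0), w2 k j * b1 j) + b2 k) :=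
  forward_facing_relu_general n p w1 b1 hw1 w2 b2 x k
end

section
/- For every n ≥ 1 and p ≥ 1 there exists a choice of real weights w_{1j} ≠ 0, w_{2kj} and biases b_{1j}, b_{2k} (j = 1, …, n, k = 1, …, p) such that the single-hidden-layer ℝ → ℝ^p ReLU neural network y_k(x) = Σ_{j=1}^{n} w_{2kj} σ(w_{1j} x + b_{1j}) + b_{2k} has exactly n knots; hence the upper bound of n knots for single-hidden-layer networks with n neurons is tight. -/
theorem differentiableAt_relu_iff {x : ℝ} : DifferentiableAt ℝ relu x ↔ x ≠ 0 := by
  refine ⟨?_, fun hx => ?_⟩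
  · rintro h rfl
    have habs : (abs : ℝ → ℝ) = fun y => 2 * relu y - y := by
      funext y
      rcases le_or_gt 0 y with hy | hy
      · simp [relu, hy, abs_of_nonneg hy]; ring
      · simp [relu, hy.le, abs_of_neg hy]
    exact not_differentiableAt_abs_zero (habs ▸ (h.const_mul 2).sub differentiableAt_fun_id)
  · rcases hx.lt_or_gt with h | h
    · have : relu =ᶠ[nhds x] fun _ => 0 := by
        filter_upwards [Iio_mem_nhds h] with y hy
        simp [relu, hy.out.le]
      exact (differentiableAt_const 0).congr_of_eventuallyEq this
    · have : relu =ᶠ[nhds x] id := by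
        filter_upwards [Ioi_mem_nhds h] with y hy
        simp [relu, hy.out.le]
      exact differentiableAt_id.congr_of_eventuallyEq this

theorem differentiableAt_relu_sub_iff {a x : ℝ} :
    DifferentiableAt ℝ (fun y => relu (y - a)) x ↔ x ≠ a := by
  rw [differentiableAt_comp_sub_const, differentiableAt_relu_iff, sub_ne_zero]

section

variable {𝕜 E F : Type*} [NontriviallyNormedField 𝕜]
  [NormedAddCommGroup E] [NormedSpace 𝕜 E] [NormedAddCommGroup F] [NormedSpace 𝕜 F]

theorem differentiableAt_fun_const_pi_iff {ι : Type*} [Fintype ι] [Nonempty ι] {g : E → F}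
    {x : E} : DifferentiableAt 𝕜 (fun y (_ : ι) => g y) x ↔ DifferentiableAt 𝕜 g x := by
  rw [differentiableAt_pi]
  exact ⟨fun h => h (Classical.arbitrary ι), fun h _ => h⟩

theorem setOf_not_differentiableAt_sum {ι : Type*} [Fintype ι] {f : ι → E → F} {c : ι → E}
    (hc : Function.Injective c) (hf : ∀ j x, DifferentiableAt 𝕜 (f j) x ↔ x ≠ c j) :
    {x | ¬ DifferentiableAt 𝕜 (fun x => ∑ j, f j x) x} = Set.range c := by
  classical
  ext x
  simp only [Set.mem_ofPred_eq, Set.mem_range]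
  refine ⟨fun hx => ?_, ?_⟩
  · by_contra! hne
    exact hx (DifferentiableAt.fun_sum fun j _ => (hf j x).2 (hne j).symm)
  · rintro ⟨m, rfl⟩ hsum
    have hrest : DifferentiableAt 𝕜 (fun x => ∑ j ∈ Finset.univ.erase m, f j x) (c m) :=
      DifferentiableAt.fun_sum fun j hj =>
        (hf j _).2 fun h => (Finset.mem_erase.1 hj).1 (hc h).symm
    have hsplit :
        (fun x => ∑ j, f j x) - (fun x => ∑ j ∈ Finset.univ.erase m, f j x) = f m := by
      funext x
      rw [Pi.sub_apply, ← Finset.add_sum_erase _ _ (Finset.mem_univ m), add_sub_cancel_right]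
    exact (hf m (c m)).1 (hsplit ▸ hsum.sub hrest) rfl

end

theorem single_layer_knot_bound_tight_general (n p : ℕ) (hp : 1 ≤ p) :
    ∃ (w1 b1 : Fin n → ℝ) (w2 : Fin p → Fin n → ℝ) (b2 : Fin p → ℝ),
      (∀ j, w1 j ≠ 0) ∧
      {x : ℝ | ¬ DifferentiableAt ℝ
        (fun x : ℝ => fun k : Fin p => (∑ j, w2 k j * relu (w1 j * x + b1 j)) + b2 k)
        x}.Finite ∧
      {x : ℝ | ¬ DifferentiableAt ℝ
        (fun x : ℝ => fun k : Fin p => (∑ j, w2 k j * relu (w1 j * x + b1 j)) + b2 k)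
        x}.ncard = n := by
  refine ⟨fun _ => 1, fun j => -(j : ℝ), fun _ _ => 1, fun _ => 0, fun _ => one_ne_zero, ?_⟩
  have : Nonempty (Fin p) := Fin.pos_iff_nonempty.1 hp
  have hinj : Function.Injective fun j : Fin n => (j : ℝ) :=
    Nat.cast_injective.comp Fin.val_injective
  have hknots : {x : ℝ | ¬ DifferentiableAt ℝ
      (fun x : ℝ => fun _ : Fin p => (∑ j : Fin n, 1 * relu (1 * x + -(j : ℝ))) + 0) x}
      = Set.range fun j : Fin n => (j : ℝ) := by
    simp only [one_mul, add_zero, ← sub_eq_add_neg, differentiableAt_fun_const_pi_iff]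
    exact setOf_not_differentiableAt_sum hinj fun j x => differentiableAt_relu_sub_iff
  rw [hknots]
  exact ⟨Set.finite_range _, by rw [Set.ncard_range_of_injective hinj, Nat.card_eq_fintype_card,
    Fintype.card_fin]⟩

/-- **The single-layer bound of `n` knots is tight.** For every `n ≥ 1` and `p ≥ 1`
there are weights (with nonzero input weights) and biases such that the
single-hidden-layer `ℝ → ℝ^p` ReLU network with `n` neurons has exactly `n` knots. -/
theorem single_layer_knot_bound_tight (n p : ℕ) (hn : 1 ≤ n) (hp : 1 ≤ p) :
    ∃ (w1 b1 : Fin n → ℝ) (w2 : Fin p → Fin n → ℝ) (b2 : Fin p → ℝ),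
      (∀ j, w1 j ≠ 0) ∧
      {x : ℝ | ¬ DifferentiableAt ℝ
        (fun x : ℝ => fun k : Fin p => (∑ j, w2 k j * relu (w1 j * x + b1 j)) + b2 k)
        x}.Finite ∧
      {x : ℝ | ¬ DifferentiableAt ℝ
        (fun x : ℝ => fun k : Fin p => (∑ j, w2 k j * relu (w1 j * x + b1 j)) + b2 k)
        x}.ncard = n :=
  single_layer_knot_bound_tight_general n p hp
end

section
/- Let n ≥ 3 and define g : ℝ → ℝ by g(x) = Σ_{j=1}^{n} w_{2j} σ(w_{1j} x + b_{1j}), where w_{1j} = 1 and b_{1j} = −(j − 1) for j ≠ 3, w_{13} = −1 and b_{13} = 2, and w_{21} = 3/2, w_{2j} = −1 for even j, w_{2j} = 1 for odd j > 1. Then g is continuous and piecewise affine with exactly n knots, located at x = 0, 1, …, n − 1; its slope on (−∞, 0] is −1 and its slopes on the successive intervals [0,1], [1,2], …, [n−1, ∞) alternate as 1/2, −1/2, 1/2, −1/2, …. In particular, g is a sawtooth wave with n knots. -/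
/-- For knot points `t 0 < t 1 < ⋯ < t (m-1)`, the `r`-th piece (`0 ≤ r ≤ m`) of the real
line: `(-∞, t 0]` for `r = 0`, `[t (r-1), t r]` for `0 < r < m`, and `[t (m-1), ∞)` for
`r = m` (all of `ℝ` if `m = 0`). -/
def piece (m : ℕ) (t : ℕ → ℝ) (r : ℕ) : Set ℝ :=
  {x | (1 ≤ r → t (r - 1) ≤ x) ∧ (r < m → x ≤ t r)}

/-- `g : ℝ → ℝ` is a sawtooth wave with `m` knots and knot values alternating between
`gmin` and `gmax` (`gmin < gmax`): `g` is continuous, and there exist points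
`t 0 < ⋯ < t (m-1)` such that `g` is affine with nonzero slope on each of the `m + 1`
pieces `(-∞, t 0], [t 0, t 1], …, [t (m-1), ∞)`, the slopes on consecutive pieces
alternate in sign, and the values `g (t i)` alternate between `gmin` and `gmax`. -/
def IsSawtooth (g : ℝ → ℝ) (m : ℕ) (gmin gmax : ℝ) : Prop :=
  Continuous g ∧ gmin < gmax ∧
  ∃ (t : ℕ → ℝ) (a : ℕ → ℝ),
    (∀ i j, i < j → j < m → t i < t j) ∧
    (∀ r ≤ m, a r ≠ 0) ∧
    (∀ r, r < m → a r * a (r + 1) < 0) ∧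
    (∀ r ≤ m, ∃ c : ℝ, ∀ x ∈ piece m t r, g x = a r * x + c) ∧
    ((∀ i, i < m → g (t i) = if Even i then gmin else gmax) ∨
     (∀ i, i < m → g (t i) = if Even i then gmax else gmin))

noncomputable def sl (r : ℕ) : ℝ := if r = 0 then -1 else if r % 2 = 1 then 1 / 2 else -(1 / 2)

noncomputable def w2' (j : ℕ) : ℝ := if j = 0 then 3 / 2 else if j % 2 = 1 then -1 else 1

noncomputable def cst (r : ℕ) : ℝ :=
  (if r ≤ 2 then 2 else 0) + ∑ j ∈ Finset.range r, (if j = 2 then 0 else w2' j * (-(j : ℝ)))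

noncomputable def Gfun (n : ℕ) (x : ℝ) : ℝ :=
  ∑ j : Fin n, (if (j : ℕ) = 0 then (3 / 2 : ℝ) else if (j : ℕ) % 2 = 1 then -1 else 1) *
    relu ((if (j : ℕ) = 2 then (-1 : ℝ) else 1) * x + (if (j : ℕ) = 2 then (2 : ℝ) else -((j : ℕ) : ℝ)))

lemma Fsum : ∀ r : ℕ,
    (if r ≤ 2 then (-1 : ℝ) else 0) + ∑ j ∈ Finset.range r, (if j = 2 then (0 : ℝ) else w2' j) = sl r
  | 0 => by simp [sl]
  | 1 => by norm_num [sl, w2', Finset.sum_range_succ]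
  | 2 => by norm_num [sl, w2', Finset.sum_range_succ]
  | 3 => by norm_num [sl, w2', Finset.sum_range_succ]
  | (r + 4) => by
    have ih := Fsum (r + 3)
    rw [Finset.sum_range_succ]
    rw [if_neg (by omega : ¬ r + 3 ≤ 2)] at ih
    rw [zero_add] at ih
    rw [if_neg (by omega : ¬ r + 4 ≤ 2), zero_add, ih]
    rcases Nat.even_or_odd r with h | h
    · rw [Nat.even_iff] at h
      have h1 : (r + 3) % 2 = 1 := by omega
      have h2 : (r + 4) % 2 = 0 := by omega
      simp [sl, w2', h1, h2]
      norm_num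
    · rw [Nat.odd_iff] at h
      have h1 : (r + 3) % 2 = 0 := by omega
      have h2 : (r + 4) % 2 = 1 := by omega
      simp [sl, w2', h1, h2]
      norm_num

lemma sumsplit (n r : ℕ) (hn : 3 ≤ n) (hr : r ≤ n) (z : ℝ) (f : ℕ → ℝ) :
    ∑ j ∈ Finset.range n, (if j = 2 then z else if j < r then f j else 0)
      = z + ∑ j ∈ Finset.range r, (if j = 2 then 0 else f j) := by
  have key : ∀ j ∈ Finset.range n, (if j = 2 then z else if j < r then f j else 0)
      = (if j = 2 then z else 0) + (if j = 2 then (0 : ℝ) else if j < r then f j else 0) := by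
    intro j _
    by_cases h : j = 2 <;> simp [h]
  rw [Finset.sum_congr rfl key, Finset.sum_add_distrib,
    Finset.sum_ite_eq' (Finset.range n) 2 (fun _ => z),
    if_pos (Finset.mem_range.mpr (by omega))]
  congr 1
  rw [← Finset.sum_subset (Finset.range_subset_range.mpr hr)]
  · apply Finset.sum_congr rfl
    intro j hj
    rw [Finset.mem_range] at hj
    by_cases h : j = 2 <;> simp [h, hj]
  · intro j _ hj
    rw [Finset.mem_range, not_lt] at hj
    by_cases h : j = 2
    · rw [if_pos h]
    · rw [if_neg h, if_neg (by omega)]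

lemma g_affine (n : ℕ) (hn : 3 ≤ n) (r : ℕ) (hr : r ≤ n) (x : ℝ)
    (hx : x ∈ piece n (fun j => (j : ℝ)) r) :
    Gfun n x = sl r * x + cst r := by
  obtain ⟨hx1, hx2⟩ := hx
  unfold Gfun
  have key : ∀ j : Fin n,
      (if (j : ℕ) = 0 then (3 / 2 : ℝ) else if (j : ℕ) % 2 = 1 then -1 else 1) *
        relu ((if (j : ℕ) = 2 then (-1 : ℝ) else 1) * x + (if (j : ℕ) = 2 then (2 : ℝ) else -((j : ℕ) : ℝ)))
      = (if (j : ℕ) = 2 then (if r ≤ 2 then (-1 : ℝ) else 0) else if (j : ℕ) < r then w2' j else 0) * x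
        + (if (j : ℕ) = 2 then (if r ≤ 2 then (2 : ℝ) else 0) else if (j : ℕ) < r then w2' j * (-((j : ℕ) : ℝ)) else 0) := by
    intro j
    by_cases hj2 : (j : ℕ) = 2
    · rw [if_pos hj2, if_pos hj2, if_pos hj2, if_pos hj2, hj2]
      have hw1 : (if (2 : ℕ) = 0 then (3 / 2 : ℝ) else if (2 : ℕ) % 2 = 1 then -1 else 1) = 1 := by
        norm_num
      rw [hw1, one_mul]
      by_cases hr2 : r ≤ 2
      · have hrn : r < n := by omega
        have hxr : x ≤ (r : ℝ) := hx2 hrn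
        have : x ≤ 2 := le_trans hxr (by exact_mod_cast Nat.cast_le.mpr hr2)
        rw [if_pos hr2, if_pos hr2]
        unfold relu
        rw [max_eq_right (show (0:ℝ) ≤ -1 * x + 2 by linarith)]
      · have hr1 : 1 ≤ r := by omega
        have hxl : ((r - 1 : ℕ) : ℝ) ≤ x := hx1 hr1
        have hc : ((r - 1 : ℕ) : ℝ) = (r : ℝ) - 1 := by
          have := Nat.cast_sub hr1 (R := ℝ)
          simpa using this
        have hr3 : (3 : ℝ) ≤ (r : ℝ) := by exact_mod_cast (by omega : 3 ≤ r)
        have : (2 : ℝ) ≤ x := by rw [hc] at hxl; linarith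
        rw [if_neg hr2, if_neg hr2]
        unfold relu
        rw [max_eq_left (show -1 * x + 2 ≤ (0:ℝ) by linarith)]
        ring_nf
    · rw [if_neg hj2, if_neg hj2, if_neg hj2, if_neg hj2]
      have hw : (if (j : ℕ) = 0 then (3 / 2 : ℝ) else if (j : ℕ) % 2 = 1 then -1 else 1) = w2' j := by
        unfold w2'; rfl
      rw [hw]
      by_cases hjr : (j : ℕ) < r
      · have hr1 : 1 ≤ r := by omega
        have hxl : ((r - 1 : ℕ) : ℝ) ≤ x := hx1 hr1
        have hjl : ((j : ℕ) : ℝ) ≤ ((r - 1 : ℕ) : ℝ) := by exact_mod_cast (by omega : (j : ℕ) ≤ r - 1)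
        rw [if_pos hjr, if_pos hjr]
        unfold relu
        rw [one_mul, max_eq_right (show (0:ℝ) ≤ x + -↑(j:ℕ) by linarith)]
        ring
      · have hrn : r < n := by
          rcases lt_or_eq_of_le hr with h | h
          · exact h
          · exact absurd (j.isLt) (by omega)
        have hxr : x ≤ (r : ℝ) := hx2 hrn
        have hjl : (r : ℝ) ≤ ((j : ℕ) : ℝ) := by exact_mod_cast (by omega : r ≤ (j : ℕ))
        rw [if_neg hjr, if_neg hjr]
        unfold relu
        rw [one_mul, max_eq_left (show x + -↑(j:ℕ) ≤ (0:ℝ) by linarith)]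
        ring
  rw [Finset.sum_congr rfl (fun j _ => key j), Finset.sum_add_distrib, ← Finset.sum_mul]
  have e1 := Fin.sum_univ_eq_sum_range
    (fun j => (if j = 2 then (if r ≤ 2 then (-1 : ℝ) else 0) else if j < r then w2' j else 0)) n
  have e2 := Fin.sum_univ_eq_sum_range
    (fun j => (if j = 2 then (if r ≤ 2 then (2 : ℝ) else 0) else if j < r then w2' j * (-(j : ℝ)) else 0)) n
  rw [e1, e2, sumsplit n r hn hr _ _, sumsplit n r hn hr _ _, Fsum r]
  rfl

lemma g_cont (n : ℕ) : Continuous (Gfun n) := by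
  unfold Gfun
  apply continuous_finset_sum
  intro j _
  apply Continuous.mul continuous_const
  unfold relu
  exact continuous_const.max ((continuous_const.mul continuous_id).add continuous_const)

lemma piece_left (n k : ℕ) (hk : k < n) :
    Set.Icc ((k : ℝ) - 1) (k : ℝ) ⊆ piece n (fun j => (j : ℝ)) k := by
  intro y hy
  obtain ⟨h1, h2⟩ := hy
  constructor
  · intro hk1
    have : ((k - 1 : ℕ) : ℝ) = (k : ℝ) - 1 := by
      have := Nat.cast_sub hk1 (R := ℝ); simpa using this
    simpa [this] using h1
  · intro _; exact h2

lemma piece_right (n k : ℕ) (hk : k < n) :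
    Set.Icc (k : ℝ) ((k : ℝ) + 1) ⊆ piece n (fun j => (j : ℝ)) (k + 1) := by
  intro y hy
  obtain ⟨h1, h2⟩ := hy
  constructor
  · intro _; simpa using h1
  · intro _
    have : ((k + 1 : ℕ) : ℝ) = (k : ℝ) + 1 := by push_cast; ring
    simpa [this] using h2

lemma hasDeriv_on_piece (n : ℕ) (hn : 3 ≤ n) (r : ℕ) (hr : r ≤ n) (s : Set ℝ)
    (hs : s ⊆ piece n (fun j => (j : ℝ)) r) (x : ℝ) (hx : x ∈ s) :
    HasDerivWithinAt (Gfun n) (sl r) s x := by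
  have h0 : HasDerivAt (fun y => sl r * y + cst r) (sl r) x := by
    have := ((hasDerivAt_id x).const_mul (sl r)).add_const (cst r)
    simpa using this
  exact h0.hasDerivWithinAt.congr (fun y hy => g_affine n hn r hr y (hs hy))
    (g_affine n hn r hr x (hs hx))

lemma sl_ne (k : ℕ) : sl k ≠ sl (k + 1) := by
  rcases k with _ | k
  · norm_num [sl]
  · rcases Nat.even_or_odd k with h | h
    · rw [Nat.even_iff] at h
      have h1 : (k + 1) % 2 = 1 := by omega
      have h2 : (k + 2) % 2 = 0 := by omega
      norm_num [sl, h1, h2]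
    · rw [Nat.odd_iff] at h
      have h1 : (k + 1) % 2 = 0 := by omega
      have h2 : (k + 2) % 2 = 1 := by omega
      norm_num [sl, h1, h2]

lemma not_diff (n : ℕ) (hn : 3 ≤ n) (k : ℕ) (hk : k < n) :
    ¬ DifferentiableAt ℝ (Gfun n) (k : ℝ) := by
  intro hd
  have hx1 : (k : ℝ) ∈ Set.Icc ((k : ℝ) - 1) (k : ℝ) := by constructor <;> norm_num
  have hx2 : (k : ℝ) ∈ Set.Icc (k : ℝ) ((k : ℝ) + 1) := by constructor <;> norm_num
  have u1 : UniqueDiffWithinAt ℝ (Set.Icc ((k : ℝ) - 1) (k : ℝ)) (k : ℝ) :=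
    (uniqueDiffOn_Icc (by linarith)) _ hx1
  have u2 : UniqueDiffWithinAt ℝ (Set.Icc (k : ℝ) ((k : ℝ) + 1)) (k : ℝ) :=
    (uniqueDiffOn_Icc (by linarith)) _ hx2
  have h1 : HasDerivWithinAt (Gfun n) (sl k) (Set.Icc ((k : ℝ) - 1) (k : ℝ)) (k : ℝ) :=
    hasDeriv_on_piece n hn k (le_of_lt hk) _ (piece_left n k hk) _ hx1
  have h2 : HasDerivWithinAt (Gfun n) (sl (k + 1)) (Set.Icc (k : ℝ) ((k : ℝ) + 1)) (k : ℝ) :=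
    hasDeriv_on_piece n hn (k + 1) hk _ (piece_right n k hk) _ hx2
  have e1 : sl k = deriv (Gfun n) (k : ℝ) := by
    rw [← h1.derivWithin u1, (hd.hasDerivAt.hasDerivWithinAt).derivWithin u1]
  have e2 : sl (k + 1) = deriv (Gfun n) (k : ℝ) := by
    rw [← h2.derivWithin u2, (hd.hasDerivAt.hasDerivWithinAt).derivWithin u2]
  exact sl_ne k (e1.trans e2.symm)

lemma diff_of_piece (n : ℕ) (hn : 3 ≤ n) (r : ℕ) (hr : r ≤ n) (x : ℝ) (U : Set ℝ)
    (hU : IsOpen U) (hxU : x ∈ U) (hUp : U ⊆ piece n (fun j => (j : ℝ)) r) :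
    DifferentiableAt ℝ (Gfun n) x := by
  have heq : Gfun n =ᶠ[nhds x] fun y => sl r * y + cst r := by
    filter_upwards [hU.mem_nhds hxU] with y hy
    exact g_affine n hn r hr y (hUp hy)
  have hdiff : DifferentiableAt ℝ (fun y => sl r * y + cst r) x :=
    ((differentiable_id.const_mul (sl r)).add_const (cst r)).differentiableAt
  exact hdiff.congr_of_eventuallyEq heq

lemma diff_off_knots (n : ℕ) (hn : 3 ≤ n) (x : ℝ) (hx : ∀ j : ℕ, j < n → x ≠ (j : ℝ)) :
    DifferentiableAt ℝ (Gfun n) x := by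
  rcases lt_trichotomy x 0 with h0 | h0 | h0
  · exact diff_of_piece n hn 0 (by omega) x (Set.Iio 0) isOpen_Iio h0
      (fun y hy => ⟨fun h => absurd h (by omega), fun _ => by
        simpa using (le_of_lt (Set.mem_Iio.mp hy))⟩)
  · exact absurd (by exact_mod_cast h0 : x = ((0 : ℕ) : ℝ)) (hx 0 (by omega))
  · by_cases hbig : ((n : ℝ) - 1) < x
    · refine diff_of_piece n hn n le_rfl x (Set.Ioi ((n : ℝ) - 1)) isOpen_Ioi hbig
        (fun y hy => ⟨fun _ => ?_, fun h => absurd h (lt_irrefl n)⟩)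
      show ((n - 1 : ℕ) : ℝ) ≤ y
      have hc : ((n - 1 : ℕ) : ℝ) = (n : ℝ) - 1 := by
        have := Nat.cast_sub (by omega : 1 ≤ n) (R := ℝ); simpa using this
      rw [hc]; exact le_of_lt hy
    · push_neg at hbig
      set k : ℕ := (⌊x⌋).toNat with hkdef
      have hfl0 : (0 : ℤ) ≤ ⌊x⌋ := Int.floor_nonneg.mpr (le_of_lt h0)
      have hkc : ((k : ℕ) : ℝ) = ((⌊x⌋ : ℤ) : ℝ) := by
        have h1 : ((⌊x⌋.toNat : ℤ) : ℝ) = ((⌊x⌋ : ℤ) : ℝ) := by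
          rw [Int.toNat_of_nonneg hfl0]
        rw [hkdef]
        push_cast at h1 ⊢
        exact h1
      have hkle : (k : ℝ) ≤ x := by rw [hkc]; exact Int.floor_le x
      have hklt : x < (k : ℝ) + 1 := by rw [hkc]; exact_mod_cast Int.lt_floor_add_one x
      have hkn : k + 1 ≤ n := by
        by_contra hcon
        push_neg at hcon
        have : ((n : ℝ)) ≤ (k : ℝ) := by exact_mod_cast (by omega : n ≤ k)
        linarith
      have hxk : x ≠ (k : ℝ) := hx k (by omega)
      refine diff_of_piece n hn (k + 1) hkn x (Set.Ioo (k : ℝ) ((k : ℝ) + 1)) isOpen_Ioo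
        ⟨lt_of_le_of_ne hkle (Ne.symm hxk), hklt⟩ (fun y hy => ⟨fun _ => ?_, fun _ => ?_⟩)
      · show ((k + 1 - 1 : ℕ) : ℝ) ≤ y
        simpa using le_of_lt hy.1
      · show y ≤ ((k + 1 : ℕ) : ℝ)
        have hc : ((k + 1 : ℕ) : ℝ) = (k : ℝ) + 1 := by push_cast; ring
        rw [hc]; exact le_of_lt hy.2

lemma g_val (n : ℕ) (hn : 3 ≤ n) : ∀ k : ℕ, k < n →
    Gfun n (k : ℝ) = if Even k then 2 else 5 / 2 := by
  intro k
  induction k with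
  | zero =>
    intro _
    have h0 : (0 : ℝ) ∈ piece n (fun j => (j : ℝ)) 0 :=
      ⟨fun h => absurd h (by omega), fun _ => by norm_num⟩
    rw [show ((0 : ℕ) : ℝ) = (0 : ℝ) by norm_num, g_affine n hn 0 (by omega) 0 h0]
    simp [sl, cst]
  | succ k ih =>
    intro hk1
    have hk : k < n := by omega
    have hm1 : (k : ℝ) ∈ piece n (fun j => (j : ℝ)) (k + 1) :=
      piece_right n k hk ⟨le_refl _, by linarith⟩
    have hm2 : ((k + 1 : ℕ) : ℝ) ∈ piece n (fun j => (j : ℝ)) (k + 1) := by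
      have hc : ((k + 1 : ℕ) : ℝ) = (k : ℝ) + 1 := by push_cast; ring
      rw [hc]; exact piece_right n k hk ⟨by linarith, le_refl _⟩
    have e1 := g_affine n hn (k + 1) hk1.le (k : ℝ) hm1
    have e2 := g_affine n hn (k + 1) hk1.le ((k + 1 : ℕ) : ℝ) hm2
    have hc : ((k + 1 : ℕ) : ℝ) = (k : ℝ) + 1 := by push_cast; ring
    have ihv := ih hk
    rw [e1] at ihv
    rw [e2, hc]
    rcases Nat.even_or_odd k with h | h
    · have hke : Even k := h
      rw [Nat.even_iff] at h
      have h1 : (k + 1) % 2 = 1 := by omega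
      have h2 : ¬ Even (k + 1) := by rw [Nat.even_iff]; omega
      rw [if_pos hke] at ihv
      rw [if_neg h2]
      have hsl : sl (k + 1) = 1 / 2 := by simp [sl, h1]
      rw [hsl] at ihv ⊢
      linarith
    · rw [Nat.odd_iff] at h
      have h1 : (k + 1) % 2 = 0 := by omega
      have hko : ¬ Even k := by rw [Nat.even_iff]; omega
      have h2 : Even (k + 1) := by rw [Nat.even_iff]; omega
      rw [if_neg hko] at ihv
      rw [if_pos h2]
      have hsl : sl (k + 1) = -(1 / 2) := by simp [sl, h1]
      rw [hsl] at ihv ⊢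
      linarith

/-- **Lemma 3 (explicit sawtooth from one hidden layer).** With `n ≥ 3` neurons, input
weights `w_{1j} = 1`, `b_{1j} = -(j-1)` except `w_{13} = -1`, `b_{13} = 2` (1-indexed;
here `j : Fin n` is 0-indexed so the third neuron is `j.val = 2`), and output weights
`3/2, -1, 1, -1, 1, …`, the linear combination `g(x) = ∑_j w_{2j} σ(w_{1j} x + b_{1j})`
is continuous and piecewise affine with exactly `n` knots at `x = 0, 1, …, n-1`, slope
`-1` on `(-∞, 0]` and slopes alternating `1/2, -1/2, 1/2, …` on the subsequent pieces;
in particular it is a sawtooth wave with `n` knots. -/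
theorem sawtooth_first_layer (n : ℕ) (hn : 3 ≤ n) :
    let w1 : Fin n → ℝ := fun j => if j.val = 2 then -1 else 1
    let b1 : Fin n → ℝ := fun j => if j.val = 2 then 2 else -(j.val : ℝ)
    let w2 : Fin n → ℝ := fun j =>
      if j.val = 0 then 3 / 2 else if j.val % 2 = 1 then -1 else 1
    let g : ℝ → ℝ := fun x => ∑ j, w2 j * relu (w1 j * x + b1 j)
    let t : ℕ → ℝ := fun j => (j : ℝ)
    Continuous g ∧
    {x : ℝ | ¬ DifferentiableAt ℝ g x} = {x : ℝ | ∃ j : ℕ, j < n ∧ x = (j : ℝ)} ∧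
    (∀ r ≤ n, ∃ c : ℝ, ∀ x ∈ piece n t r,
      g x = (if r = 0 then -1 else if r % 2 = 1 then 1 / 2 else -(1 / 2)) * x + c) ∧
    ∃ gmin gmax : ℝ, IsSawtooth g n gmin gmax := by
  intro w1 b1 w2 g t
  have hg : g = Gfun n := rfl
  rw [hg]
  refine ⟨g_cont n, ?_, ?_, ?_⟩
  · ext x
    simp only [Set.mem_setOf_eq]
    constructor
    · intro hnd
      by_contra hcon
      push_neg at hcon
      exact hnd (diff_off_knots n hn x hcon)
    · rintro ⟨j, hj, rfl⟩
      exact not_diff n hn j hj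
  · intro r hr
    exact ⟨cst r, fun x hx => g_affine n hn r hr x hx⟩
  · refine ⟨2, 5 / 2, g_cont n, by norm_num, t, sl, ?_, ?_, ?_, ?_, ?_⟩
    · intro i j hij _
      show (i : ℝ) < (j : ℝ)
      exact_mod_cast hij
    · intro r _
      unfold sl
      rcases r with _ | r
      · norm_num
      · by_cases h : (r + 1) % 2 = 1 <;> simp [h] <;> norm_num
    · intro r _
      rcases r with _ | r
      · norm_num [sl]
      · rcases Nat.even_or_odd r with h | h
        · rw [Nat.even_iff] at h
          have h1 : (r + 1) % 2 = 1 := by omega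
          have h2 : (r + 2) % 2 = 0 := by omega
          norm_num [sl, h1, h2]
        · rw [Nat.odd_iff] at h
          have h1 : (r + 1) % 2 = 0 := by omega
          have h2 : (r + 2) % 2 = 1 := by omega
          norm_num [sl, h1, h2]
    · intro r hr
      exact ⟨cst r, fun x hx => g_affine n hn r hr x hx⟩
    · left
      intro i hi
      exact g_val n hn i hi
end

section
/- Let f : ℝ → ℝ be continuous and suppose there exist points x_1 < … < x_m such that f is affine on each of the m + 1 intervals (−∞, x_1], [x_1, x_2], …, [x_m, ∞). Then σ ∘ f (where σ(x) = max(0, x)) is continuous, piecewise affine with finitely many pieces, and has at most 2m + 1 knots: the set of points at which σ ∘ f is not differentiable has cardinality at most 2m + 1 (at most the m knots of f that are retained plus at most m + 1 new knots created at roots of f). -/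
open Set Filter Topology

def openPiece (m : ℕ) (t : ℕ → ℝ) (r : ℕ) : Set ℝ :=
  {x | (1 ≤ r → t (r - 1) < x) ∧ (r < m → x < t r)}

section Pieces

variable {m : ℕ} {t : ℕ → ℝ} {r : ℕ}

lemma openPiece_subset_piece : openPiece m t r ⊆ piece m t r :=
  fun _ hx => ⟨fun h => (hx.1 h).le, fun h => (hx.2 h).le⟩

lemma isOpen_openPiece (m : ℕ) (t : ℕ → ℝ) (r : ℕ) : IsOpen (openPiece m t r) := by
  refine IsOpen.inter ?_ ?_
  · by_cases h : 1 ≤ r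
    · simp only [h, true_implies]; exact isOpen_Ioi
    · simp only [h, false_implies]; exact isOpen_univ
  · by_cases h : r < m
    · simp only [h, true_implies]; exact isOpen_Iio
    · simp only [h, false_implies]; exact isOpen_univ

lemma mem_openPiece_of_mem_uIoo {x y z : ℝ} (hx : x ∈ piece m t r) (hy : y ∈ piece m t r)
    (hz : z ∈ uIoo x y) : z ∈ openPiece m t r :=
  ⟨fun h => (le_inf (hx.1 h) (hy.1 h)).trans_lt hz.1,
    fun h => hz.2.trans_le (sup_le (hx.2 h) (hy.2 h))⟩

lemma notMem_openPiece_of_mem_image (ht : StrictMonoOn t (Iio m)) (hr : r ≤ m) {y : ℝ}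
    (hy : y ∈ t '' Iio m) : y ∉ openPiece m t r := by
  obtain ⟨j, hj : j < m, rfl⟩ := hy
  rintro ⟨hlow, hupp⟩
  rcases lt_or_ge j r with hjr | hrj
  · have := ht.monotoneOn hj (show r - 1 < m by omega) (show j ≤ r - 1 by omega)
    linarith [hlow (by omega)]
  · have := ht.monotoneOn (show r < m by omega) hj hrj
    linarith [hupp (by omega)]

lemma openPiece_nonempty (ht : StrictMonoOn t (Iio m)) : (openPiece m t r).Nonempty := by
  by_cases h1 : 1 ≤ r
  · by_cases h2 : r < m
    · have : t (r - 1) < t r := ht (show r - 1 < m by omega) h2 (by omega)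
      exact ⟨(t (r - 1) + t r) / 2, fun _ => by linarith, fun _ => by linarith⟩
    · exact ⟨t (r - 1) + 1, fun _ => by linarith, fun h => absurd h h2⟩
  · exact ⟨t r - 1, fun h => absurd h h1, fun _ => by linarith⟩

lemma exists_mem_openPiece {x : ℝ} (hx : x ∉ t '' Iio m) : ∃ r ≤ m, x ∈ openPiece m t r := by
  classical
  -- `r` is the first index whose knot lies to the right of `x`, or `m` if there is none.
  have hex : ∃ i, i = m ∨ x < t i := ⟨m, Or.inl rfl⟩
  have hrm : Nat.find hex ≤ m := Nat.find_min' hex (Or.inl rfl)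
  refine ⟨Nat.find hex, hrm, fun h1 => ?_, fun h2 => (Nat.find_spec hex).resolve_left h2.ne⟩
  have hprev := Nat.find_min hex (show Nat.find hex - 1 < Nat.find hex by omega)
  push Not at hprev
  exact hprev.2.lt_of_ne fun h => hx ⟨_, show Nat.find hex - 1 < m by omega, h⟩

lemma exists_piece_subset_piece {m' : ℕ} {t' : ℕ → ℝ} (ht' : StrictMonoOn t' (Iio m'))
    (hr : r ≤ m') (hknots : t '' Iio m ⊆ t' '' Iio m') :
    ∃ r₀ ≤ m, piece m' t' r ⊆ piece m t r₀ := by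
  obtain ⟨z, hz⟩ := openPiece_nonempty ht'
  have hfree : ∀ y ∈ t '' Iio m, y ∉ openPiece m' t' r :=
    fun y hy => notMem_openPiece_of_mem_image ht' hr (hknots hy)
  obtain ⟨r₀, hr₀, hzr₀⟩ := exists_mem_openPiece fun h => hfree z h hz
  have hbetween : ∀ x ∈ piece m' t' r, ∀ i < m, t i ∉ uIoo x z := fun x hx i hi h =>
    hfree _ (mem_image_of_mem t hi) (mem_openPiece_of_mem_uIoo hx (openPiece_subset_piece hz) h)
  refine ⟨r₀, hr₀, fun x hx => ⟨fun h1 => ?_, fun h2 => ?_⟩⟩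
  · by_contra! hlt
    exact hbetween x hx (r₀ - 1) (by omega) (mem_uIoo_of_lt hlt (hzr₀.1 h1))
  · by_contra! hlt
    exact hbetween x hx r₀ h2 (mem_uIoo_of_gt (hzr₀.2 h2) hlt)

lemma neg_div_mem_uIoo {a b x y : ℝ} (hx : a * x + b < 0) (hy : 0 < a * y + b) :
    -b / a ∈ uIoo x y := by
  have ha : a ≠ 0 := by rintro rfl; linarith
  have hroot : a * (-b / a) + b = 0 := by field_simp; ring
  rcases ha.lt_or_gt with ha | ha
  · exact mem_uIoo_of_gt (by nlinarith) (by nlinarith)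
  · exact mem_uIoo_of_lt (by nlinarith) (by nlinarith)

lemma exists_relu_affine_on_piece {a b : ℝ} (h : -b / a ∉ openPiece m t r) :
    ∃ C D : ℝ, ∀ x ∈ piece m t r, relu (a * x + b) = C * x + D := by
  by_cases hpos : ∀ x ∈ piece m t r, 0 ≤ a * x + b
  · exact ⟨a, b, fun x hx => max_eq_right (hpos x hx)⟩
  push Not at hpos
  obtain ⟨x₀, hx₀, hneg⟩ := hpos
  refine ⟨0, 0, fun x hx => ?_⟩
  have hnonpos : a * x + b ≤ 0 := by
    by_contra! hx'
    exact h (mem_openPiece_of_mem_uIoo hx₀ hx (neg_div_mem_uIoo hneg hx'))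
  simpa [relu] using hnonpos

end Pieces

lemma differentiableAt_relu {y : ℝ} (hy : y ≠ 0) : DifferentiableAt ℝ relu y := by
  rcases hy.lt_or_gt with hy | hy
  · refine (differentiableAt_const (0 : ℝ)).congr_of_eventuallyEq ?_
    filter_upwards [eventually_lt_nhds hy] with z hz using max_eq_left hz.le
  · refine differentiableAt_id.congr_of_eventuallyEq ?_
    filter_upwards [eventually_gt_nhds hy] with z hz using max_eq_right hz.le

lemma differentiableAt_relu_comp {f : ℝ → ℝ} {a b x : ℝ} (hf : ∀ᶠ y in 𝓝 x, f y = a * y + b)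
    (hx : x ≠ -b / a) : DifferentiableAt ℝ (relu ∘ f) x := by
  suffices DifferentiableAt ℝ (fun y => relu (a * y + b)) x from
    this.congr_of_eventuallyEq (hf.mono fun y hy => by simp [hy])
  by_cases ha : a = 0
  · simp [ha]
  refine (differentiableAt_relu ?_).comp x ((differentiableAt_id.const_mul a).add_const b)
  intro h
  exact hx (by field_simp; linarith)

lemma Set.Finite.exists_strictMonoOn_surjOn {α : Type*} [LinearOrder α] [Nonempty α]
    {S : Set α} (hS : S.Finite) :
    ∃ (n : ℕ) (e : ℕ → α), StrictMonoOn e (Iio n) ∧ SurjOn e (Iio n) S := by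
  classical
  inhabit α
  let enum := hS.toFinset.orderEmbOfFin rfl
  let e : ℕ → α := fun i => if h : i < hS.toFinset.card then enum ⟨i, h⟩ else default
  refine ⟨hS.toFinset.card, e, fun i hi j hj hij => ?_, fun s hs => ?_⟩
  · simp only [e, dif_pos (mem_Iio.1 hi), dif_pos (mem_Iio.1 hj)]
    exact enum.strictMono hij
  · have : s ∈ range enum := by
      rw [Finset.range_orderEmbOfFin]; simpa using hs
    obtain ⟨k, rfl⟩ := this
    exact ⟨k, k.isLt, by simp [e]⟩

theorem relu_of_spline_knot_count_general (f : ℝ → ℝ) (hf : Continuous f) (m : ℕ) (t : ℕ → ℝ)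
    (haff : ∀ r ≤ m, ∃ a b : ℝ, ∀ x ∈ piece m t r, f x = a * x + b) :
    Continuous (relu ∘ f) ∧
    (∃ (m' : ℕ) (t' : ℕ → ℝ),
      (∀ i j, i < j → j < m' → t' i < t' j) ∧
      ∀ r ≤ m', ∃ a b : ℝ, ∀ x ∈ piece m' t' r, (relu ∘ f) x = a * x + b) ∧
    {x : ℝ | ¬ DifferentiableAt ℝ (relu ∘ f) x}.Finite ∧
    {x : ℝ | ¬ DifferentiableAt ℝ (relu ∘ f) x}.ncard ≤ 2 * m + 1 := by
  choose! a b hab using haff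
  set S : Set ℝ := t '' Iio m ∪ (fun r => -b r / a r) '' Iic m
  have hSfin : S.Finite := ((finite_Iio m).image _).union ((finite_Iic m).image _)
  have hroot : ∀ r ≤ m, -b r / a r ∈ S := fun r hr => Or.inr (mem_image_of_mem _ hr)
  have hkinks : {x | ¬ DifferentiableAt ℝ (relu ∘ f) x} ⊆ S := by
    intro x hx
    by_contra hxS
    obtain ⟨r, hr, hxr⟩ := exists_mem_openPiece fun h => hxS (Or.inl h)
    refine hx (differentiableAt_relu_comp ?_ fun h => hxS (h ▸ hroot r hr))
    filter_upwards [(isOpen_openPiece m t r).mem_nhds hxr] with y hy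
      using hab r hr y (openPiece_subset_piece hy)
  obtain ⟨m', t', ht', hSt'⟩ := hSfin.exists_strictMonoOn_surjOn
  refine ⟨(continuous_const.max continuous_id).comp hf,
    ⟨m', t', fun i j hij hj => ht' (hij.trans hj) hj hij, fun r hr => ?_⟩,
    hSfin.subset hkinks, ?_⟩
  · obtain ⟨r₀, hr₀, hsub⟩ := exists_piece_subset_piece ht' hr (subset_union_left.trans hSt')
    obtain ⟨C, D, hCD⟩ := exists_relu_affine_on_piece
      (notMem_openPiece_of_mem_image ht' hr (hSt' (hroot r₀ hr₀)))
    exact ⟨C, D, fun x hx => by rw [Function.comp_apply, hab r₀ hr₀ x (hsub hx), hCD x hx]⟩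
  · calc _ ≤ S.ncard := ncard_le_ncard hkinks hSfin
      _ ≤ (t '' Iio m).ncard + ((fun r => -b r / a r) '' Iic m).ncard := ncard_union_le _ _
      _ ≤ m + (m + 1) := by
        gcongr
        · exact (ncard_image_le (finite_Iio m)).trans_eq (ncard_Iio_nat m)
        · exact (ncard_image_le (finite_Iic m)).trans_eq (ncard_Iic_nat m)
      _ = 2 * m + 1 := by ring

/-- **Applying a ReLU to a spline with `m` knots yields at most `2m + 1` knots.** If `f`
is continuous and affine on each of the `m + 1` pieces determined by `t 0 < ⋯ < t (m-1)`,
then `σ ∘ f` is continuous, piecewise affine with finitely many pieces, and its set of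
points of non-differentiability is finite with cardinality at most `2m + 1`. -/
theorem relu_of_spline_knot_count (f : ℝ → ℝ) (hf : Continuous f) (m : ℕ) (t : ℕ → ℝ)
    (ht : ∀ i j, i < j → j < m → t i < t j)
    (haff : ∀ r ≤ m, ∃ a b : ℝ, ∀ x ∈ piece m t r, f x = a * x + b) :
    Continuous (relu ∘ f) ∧
    (∃ (m' : ℕ) (t' : ℕ → ℝ),
      (∀ i j, i < j → j < m' → t' i < t' j) ∧
      ∀ r ≤ m', ∃ a b : ℝ, ∀ x ∈ piece m' t' r, (relu ∘ f) x = a * x + b) ∧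
    {x : ℝ | ¬ DifferentiableAt ℝ (relu ∘ f) x}.Finite ∧
    {x : ℝ | ¬ DifferentiableAt ℝ (relu ∘ f) x}.ncard ≤ 2 * m + 1 :=
  relu_of_spline_knot_count_general f hf m t haff
end

section
/- There do not exist real numbers a_1, a_2, w_1, w_2, β_1, β_2 and points t_1 < t_2 < t_3 such that the function g(x) = a_1 σ(w_1 x + β_1) + a_2 σ(w_2 x + β_2) is differentiable at t_1, t_2, t_3 with g′(t_1) < 0, g′(t_2) > 0, and g′(t_3) < 0. In other words, no linear combination of two rectified linear units of a scalar input can have slope pattern negative, then positive, then negative. -/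
/-!
Each unit `x ↦ a σ(w x + β)` has right slope `0` or `a w` at every point, and as a function of the
point this right slope is `a` times a monotone step function. So on `t₁ < t₂ < t₃` each unit's
slope is constant on `{t₁, t₂}` or on `{t₂, t₃}`, whereas the two sign changes of `g′` force one
unit to jump between `t₁` and `t₂` and the other between `t₂` and `t₃`. Then the three observed
slopes are three of the four sums `{0, a₁ w₁} + {0, a₂ w₂}`, and the pattern `-, +, -` leaves no
room for the sum `0 + 0`.
-/

open Set Filter Topology

noncomputable def reluRightSlope (w β t : ℝ) : ℝ :=
  if 0 < w * t + β then w else if w * t + β = 0 then relu w else 0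

lemma relu_affine_eventuallyEq_nhdsGE (w β t : ℝ) :
    (fun x => relu (w * x + β)) =ᶠ[𝓝[≥] t]
      fun x => relu (w * t + β) + reluRightSlope w β t * (x - t) := by
  have hcont : Continuous fun x : ℝ => w * x + β := by fun_prop
  rcases lt_trichotomy (w * t + β) 0 with hneg | hzero | hpos
  · filter_upwards [nhdsWithin_le_nhds
      (hcont.continuousAt.eventually_lt continuousAt_const hneg)] with x hx
    simp [reluRightSlope, relu, hneg.not_gt, hneg.ne, hneg.le, hx.le]
  · filter_upwards [self_mem_nhdsWithin] with x (hx : t ≤ x)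
    have : w * x + β = w * (x - t) := by linarith
    simp [reluRightSlope, relu, hzero, this, max_mul_of_nonneg _ _ (sub_nonneg.2 hx)]
  · filter_upwards [nhdsWithin_le_nhds
      (continuousAt_const.eventually_lt hcont.continuousAt hpos)] with x hx
    simp only [reluRightSlope, relu, if_pos hpos, max_eq_right hx.le, max_eq_right hpos.le]
    ring

lemma hasDerivWithinAt_relu_affine_Ici (w β t : ℝ) :
    HasDerivWithinAt (fun x => relu (w * x + β)) (reluRightSlope w β t) (Ici t) t := by
  have affine := (((hasDerivAt_id t).sub_const t).const_mul (reluRightSlope w β t)).const_add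
    (relu (w * t + β))
  simpa using affine.hasDerivWithinAt.congr_of_eventuallyEq
    (relu_affine_eventuallyEq_nhdsGE w β t) (by simp)

lemma reluRightSlope_eq_zero_or_eq (w β t : ℝ) :
    reluRightSlope w β t = 0 ∨ reluRightSlope w β t = w := by
  unfold reluRightSlope relu
  split_ifs
  · exact .inr rfl
  · exact max_choice 0 w
  · exact .inl rfl

lemma reluRightSlope_monotone (w β : ℝ) : Monotone (reluRightSlope w β) := by
  intro s t hst
  rcases le_or_gt 0 w with hw | hw
  · have := mul_le_mul_of_nonneg_left hst hw
    simp only [reluRightSlope, relu, max_eq_right hw]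
    split_ifs <;> grind
  · have := mul_le_mul_of_nonpos_left hst hw.le
    simp only [reluRightSlope, relu, max_eq_left hw.le]
    split_ifs <;> grind

lemma Monotone.eq_or_eq_of_two_valued {α β : Type*} [Preorder α] [PartialOrder β] {f : α → β}
    (hf : Monotone f) {p q : β} (hpq : ∀ x, f x = p ∨ f x = q) {x y z : α} (hxy : x ≤ y)
    (hyz : y ≤ z) : f x = f y ∨ f y = f z := by
  by_contra! ⟨hne₁, hne₂⟩
  have hxz : f x = f z := by
    rcases hpq x with hx | hx <;> rcases hpq y with hy | hy <;> rcases hpq z with hz | hz <;>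
      simp_all
  exact hne₁ ((hf hxy).antisymm (hxz ▸ hf hyz))

lemma false_of_staggered_jumps {u₁ u₂ v₂ v₃ c d : ℝ} (hu₁ : u₁ = 0 ∨ u₁ = c)
    (hu₂ : u₂ = 0 ∨ u₂ = c) (hv₂ : v₂ = 0 ∨ v₂ = d) (hv₃ : v₃ = 0 ∨ v₃ = d)
    (h₁ : u₁ + v₂ < 0) (h₂ : 0 < u₂ + v₂) (h₃ : u₂ + v₃ < 0) : False := by
  -- `u₁ ≠ u₂` and `v₂ ≠ v₃`, so one of the four sums `uᵢ + vⱼ` is `0 + 0`; it is none of the three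
  -- signed ones, and the fourth is `u₁ + v₃ = (u₁ + v₂) + (u₂ + v₃) - (u₂ + v₂) < 0`.
  rcases hu₁ with rfl | rfl <;> rcases hu₂ with rfl | rfl <;> rcases hv₂ with rfl | rfl <;>
    rcases hv₃ with rfl | rfl <;> linarith

lemma false_of_neg_pos_neg_of_two_valued {u₁ u₂ u₃ v₁ v₂ v₃ c d : ℝ}
    (hu₁ : u₁ = 0 ∨ u₁ = c) (hu₂ : u₂ = 0 ∨ u₂ = c) (hu₃ : u₃ = 0 ∨ u₃ = c)
    (hv₁ : v₁ = 0 ∨ v₁ = d) (hv₂ : v₂ = 0 ∨ v₂ = d) (hv₃ : v₃ = 0 ∨ v₃ = d)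
    (hu : u₁ = u₂ ∨ u₂ = u₃) (hv : v₁ = v₂ ∨ v₂ = v₃)
    (h₁ : u₁ + v₁ < 0) (h₂ : 0 < u₂ + v₂) (h₃ : u₃ + v₃ < 0) : False := by
  rcases hu with rfl | rfl <;> rcases hv with rfl | rfl
  · linarith
  · exact false_of_staggered_jumps hv₁ hv₂ hu₂ hu₃ (by linarith) (by linarith) (by linarith)
  · exact false_of_staggered_jumps hu₁ hu₂ hv₂ hv₃ h₁ h₂ h₃
  · linarith

/-- **Two ReLUs cannot produce a down-up-down slope pattern.** There are no coefficients
`a₁, a₂`, weights `w₁, w₂`, biases `β₁, β₂`, and points `t₁ < t₂ < t₃` such that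
`g(x) = a₁ σ(w₁ x + β₁) + a₂ σ(w₂ x + β₂)` is differentiable at `t₁, t₂, t₃` with
`g′(t₁) < 0`, `g′(t₂) > 0`, and `g′(t₃) < 0`. -/
theorem no_down_up_down_with_two_relus :
    ¬ ∃ (a₁ a₂ w₁ w₂ β₁ β₂ t₁ t₂ t₃ : ℝ),
      t₁ < t₂ ∧ t₂ < t₃ ∧
      (let g : ℝ → ℝ := fun x => a₁ * relu (w₁ * x + β₁) + a₂ * relu (w₂ * x + β₂)
       DifferentiableAt ℝ g t₁ ∧ DifferentiableAt ℝ g t₂ ∧ DifferentiableAt ℝ g t₃ ∧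
       deriv g t₁ < 0 ∧ 0 < deriv g t₂ ∧ deriv g t₃ < 0) := by
  rintro ⟨a₁, a₂, w₁, w₂, β₁, β₂, t₁, t₂, t₃, h₁₂, h₂₃, hd₁, hd₂, hd₃, hs₁, hs₂, hs₃⟩
  set g : ℝ → ℝ := fun x => a₁ * relu (w₁ * x + β₁) + a₂ * relu (w₂ * x + β₂)
  have deriv_g {t : ℝ} (ht : DifferentiableAt ℝ g t) :
      deriv g t = a₁ * reluRightSlope w₁ β₁ t + a₂ * reluRightSlope w₂ β₂ t := by
    have hright := ((hasDerivWithinAt_relu_affine_Ici w₁ β₁ t).const_mul a₁).add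
      ((hasDerivWithinAt_relu_affine_Ici w₂ β₂ t).const_mul a₂)
    exact (ht.derivWithin (uniqueDiffWithinAt_Ici t)).symm.trans
      (hright.derivWithin (uniqueDiffWithinAt_Ici t))
  rw [deriv_g hd₁] at hs₁
  rw [deriv_g hd₂] at hs₂
  rw [deriv_g hd₃] at hs₃
  have values (a w β t : ℝ) :
      a * reluRightSlope w β t = 0 ∨ a * reluRightSlope w β t = a * w := by
    rcases reluRightSlope_eq_zero_or_eq w β t with h | h <;> simp [h]
  have jump (a w β : ℝ) : a * reluRightSlope w β t₁ = a * reluRightSlope w β t₂ ∨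
      a * reluRightSlope w β t₂ = a * reluRightSlope w β t₃ :=
    ((reluRightSlope_monotone w β).eq_or_eq_of_two_valued (reluRightSlope_eq_zero_or_eq w β)
      h₁₂.le h₂₃.le).imp (congrArg _) (congrArg _)
  exact false_of_neg_pos_neg_of_two_valued (values ..) (values ..) (values ..) (values ..)
    (values ..) (values ..) (jump a₁ w₁ β₁) (jump a₂ w₂ β₂) hs₁ hs₂ hs₃
end
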